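/- Let D = (P,𝓑) be a symmetric 2-(v,k,λ) design with λ > 1 and let G be a flag-transitive automorphism group of D. Suppose that for a block B the setwise stabilizer G_B is isomorphic to the dihedral group D_{2n} with n ≥ 3. Then there exists a point x ∈ P∖B such that G_B = G_x. Moreover, if N is a cyclic subgroup of G_B of order n, then the number of points of P fixed by every element of N equals 1 or 3. -/

import Mathlib

/-!
Orbit–stabiliser counting gives `|G_x| = |G_B| = 2n` for every point `x`. Hence a cyclic subgroup
`N ≤ G_B` of order `n` has index 2 in the stabiliser of each of its fixed points, and it does have
fixed points: an automorphism of a symmetric design fixes as many points as blocks, and the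
generator of `N` fixes `B`.

Let `x ≠ y` be fixed by `N`. As `G_x` is transitive on the blocks through `x`, these form at most
two `N`-orbits, and two fixed points of `N` lie together only on the blocks of one orbit, because
some block through `x` misses `y` (`λ < k`). So the fixed points on a block `C ∋ x, y` and on a
block `D ∋ x` of the other orbit cover all fixed points, meet only in `x`, and are equinumerous
(`G_x` normalises `N`): `|Fix N| + 1 = 2 |Fix N ∩ C|`. A block through `y ∈ C` and `z ∈ D \ {x}`
carries no further fixed point, and the same identity for it gives `|Fix N| = 3`.

For the rotation subgroup `N` of `G_B`, an element of `G_B \ N` acts on the odd set `Fix N` as an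
involution, so it fixes some `x ∈ Fix N`. Then `G_B ≤ G_x`, with equality by orders, and `x ∉ B`
because `G_B` is transitive on the `k ≥ 3` points of `B`.
-/

open scoped Pointwise

/-- A group action is primitive if it is transitive and every block is trivial
(this is the usual notion of a primitive permutation group). -/
def IsPrimitiveAction (G X : Type*) [Group G] [MulAction G X] : Prop :=
  MulAction.IsPretransitive G X ∧
    ∀ B : Set X, MulAction.IsBlock G B → B.Subsingleton ∨ B = Set.univ

variable {P : Type*} [Fintype P] [DecidableEq P]

/-- `𝓑` is the block set of a (non-trivial) 2-design with parameters `(v, k, lam)`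
on the point set `P`. -/
structure IsDesign (𝓑 : Finset (Finset P)) (v k lam : ℕ) : Prop where
  card_points : Fintype.card P = v
  blocks_card : ∀ B ∈ 𝓑, B.card = k
  two_lt_k : 2 < k
  k_lt_v : k < v - 1
  lam_pos : 0 < lam
  pair_blocks : ∀ x y : P, x ≠ y → (𝓑.filter fun B => x ∈ B ∧ y ∈ B).card = lam

/-- `G` is an automorphism group of the design with block set `𝓑`:
every element of `G` maps blocks to blocks. -/
def IsAutGroup (G : Subgroup (Equiv.Perm P)) (𝓑 : Finset (Finset P)) : Prop :=
  ∀ g ∈ G, ∀ B ∈ 𝓑, g • B ∈ 𝓑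

/-- `G` acts transitively on the flags of the design with block set `𝓑`. -/
def IsFlagTransitive (G : Subgroup (Equiv.Perm P)) (𝓑 : Finset (Finset P)) : Prop :=
  ∀ B₁ ∈ 𝓑, ∀ B₂ ∈ 𝓑, ∀ x₁ ∈ B₁, ∀ x₂ ∈ B₂, ∃ g ∈ G, g • x₁ = x₂ ∧ g • B₁ = B₂

/-- `G` acts transitively on the blocks of the design with block set `𝓑`. -/
def IsBlockTransitive (G : Subgroup (Equiv.Perm P)) (𝓑 : Finset (Finset P)) : Prop :=
  ∀ B₁ ∈ 𝓑, ∀ B₂ ∈ 𝓑, ∃ g ∈ G, g • B₁ = B₂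

open Finset MulAction

theorem Finset.sum_ite_const_of_le {α : Type*} (s : Finset α) (p : α → Prop) [DecidablePred p]
    {a b : ℕ} (hba : b ≤ a) :
    ∑ x ∈ s, (if p x then a else b) = #s * b + #{x ∈ s | p x} * (a - b) := by
  rw [sum_ite, sum_const, sum_const, smul_eq_mul, smul_eq_mul,
    ← card_filter_add_card_filter_not (s := s) p]
  have : a = b + (a - b) := by omega
  conv_lhs => rw [this]
  ring

namespace IsDesign

variable {𝓑 : Finset (Finset P)} {v k lam : ℕ}

theorem card_filter_mem_mul (hD : IsDesign 𝓑 v k lam) (x : P) :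
    #{C ∈ 𝓑 | x ∈ C} * (k - 1) = (v - 1) * lam := by
  have hpairs := Finset.sum_card_inter (s := univ.erase x) (B := {C ∈ 𝓑 | x ∈ C}) (n := lam)
    fun y hy => by rw [filter_filter]; exact hD.pair_blocks x y (ne_of_mem_erase hy).symm
  rw [card_erase_of_mem (mem_univ x), card_univ, hD.card_points] at hpairs
  rw [← hpairs, ← smul_eq_mul, ← sum_const]
  refine sum_congr rfl fun C hC => ?_
  rw [mem_filter] at hC
  rw [erase_inter, univ_inter, card_erase_of_mem hC.2, hD.blocks_card C hC.1]

theorem card_filter_mem (hD : IsDesign 𝓑 v k lam) (hsym : #𝓑 = v) (x : P) :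
    #{C ∈ 𝓑 | x ∈ C} = k := by
  have hk : 0 < k - 1 := by have := hD.two_lt_k; omega
  have hconst : ∀ y, #{C ∈ 𝓑 | y ∈ C} = #{C ∈ 𝓑 | x ∈ C} := fun y =>
    Nat.eq_of_mul_eq_mul_right hk (by rw [hD.card_filter_mem_mul, hD.card_filter_mem_mul])
  have hsum := sum_card hconst
  rw [sum_congr rfl hD.blocks_card, sum_const, smul_eq_mul, hsym, hD.card_points] at hsum
  exact (Nat.eq_of_mul_eq_mul_left (by have := hD.k_lt_v; omega) hsum).symm

theorem nonempty (hD : IsDesign 𝓑 v k lam) : Nonempty P :=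
  Fintype.card_pos_iff.mp (by have := hD.k_lt_v; rw [hD.card_points]; omega)

theorem lam_mul_eq (hD : IsDesign 𝓑 v k lam) (hsym : #𝓑 = v) :
    (v - 1) * lam = k * (k - 1) := by
  obtain ⟨x⟩ := hD.nonempty
  rw [← hD.card_filter_mem_mul x, hD.card_filter_mem hsym]

theorem lam_lt_k (hD : IsDesign 𝓑 v k lam) (hsym : #𝓑 = v) : lam < k := by
  have := hD.k_lt_v
  have := hD.two_lt_k
  refine Nat.lt_of_mul_lt_mul_left (a := v - 1) ?_
  calc (v - 1) * lam = k * (k - 1) := hD.lam_mul_eq hsym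
    _ < k * (v - 1) := Nat.mul_lt_mul_of_pos_left (by omega) (by omega)
    _ = (v - 1) * k := mul_comm _ _

theorem card_filter_mem_mem (hD : IsDesign 𝓑 v k lam) (hsym : #𝓑 = v) (x y : P) :
    #{C ∈ 𝓑 | x ∈ C ∧ y ∈ C} = if x = y then k else lam := by
  split_ifs with h
  · subst h
    simpa only [and_self] using hD.card_filter_mem hsym x
  · exact hD.pair_blocks x y h

theorem sum_card_inter (hD : IsDesign 𝓑 v k lam) (hsym : #𝓑 = v) {C : Finset P} (hC : C ∈ 𝓑) :
    ∑ C' ∈ 𝓑, #(C ∩ C') = k * k := by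
  rw [Finset.sum_card_inter fun x _ => hD.card_filter_mem hsym x, hD.blocks_card C hC]

theorem sum_card_inter_sq (hD : IsDesign 𝓑 v k lam) (hsym : #𝓑 = v) {C : Finset P}
    (hC : C ∈ 𝓑) : ∑ C' ∈ 𝓑, #(C ∩ C') ^ 2 = k * (k + (k - 1) * lam) := by
  have hsq : ∀ C' : Finset P,
      #(C ∩ C') ^ 2 = ∑ x ∈ C, ∑ y ∈ C, if x ∈ C' ∧ y ∈ C' then 1 else 0 := fun C' => by
    rw [sq, ← filter_mem_eq_inter, card_filter, sum_mul_sum]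
    simp only [ite_zero_mul_ite_zero, mul_one, ite_and]
  have hrow : ∀ x ∈ C, ∑ y ∈ C, (if x = y then k else lam) = k + (k - 1) * lam := fun x hx => by
    rw [← add_sum_erase C _ hx, if_pos rfl,
      sum_congr rfl fun y hy => if_neg (ne_of_mem_erase hy).symm, sum_const, card_erase_of_mem hx, hD.blocks_card C hC, smul_eq_mul]
  simp_rw [hsq]
  rw [sum_comm]
  simp_rw [sum_comm (s := 𝓑), ← card_filter, hD.card_filter_mem_mem hsym]
  rw [sum_congr rfl hrow, sum_const, hD.blocks_card C hC, smul_eq_mul]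

theorem card_inter_eq (hD : IsDesign 𝓑 v k lam) (hsym : #𝓑 = v) {C C' : Finset P}
    (hC : C ∈ 𝓑) (hC' : C' ∈ 𝓑) (hne : C ≠ C') : #(C ∩ C') = lam := by
  have hk := hD.two_lt_k
  have hv := hD.k_lt_v
  have e0 := hD.lam_mul_eq hsym
  have e1 := hD.sum_card_inter hsym hC
  have e2 := hD.sum_card_inter_sq hsym hC
  zify [show 1 ≤ k by omega, show 1 ≤ v by omega] at e0 e1 e2
  -- the whole of this sum of squares comes from the term `D = C`
  have htotal : ∑ D ∈ 𝓑, ((#(C ∩ D) : ℤ) - lam) ^ 2 = ((k : ℤ) - lam) ^ 2 := by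
    simp only [sub_sq, sum_add_distrib, sum_sub_distrib, ← sum_mul, ← mul_sum, e1, e2, sum_const,
      nsmul_eq_mul, hsym]
    linear_combination (lam : ℤ) * e0
  rw [← add_sum_erase 𝓑 _ hC, inter_self, hD.blocks_card C hC, add_eq_left] at htotal
  have := (sum_eq_zero_iff_of_nonneg fun D _ => sq_nonneg _).mp htotal C'
    (mem_erase.mpr ⟨hne.symm, hC'⟩)
  exact_mod_cast sub_eq_zero.mp (pow_eq_zero_iff two_ne_zero |>.mp this)

theorem card_fixedPoints_eq_card_fixedBlocks (hD : IsDesign 𝓑 v k lam) (hsym : #𝓑 = v)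
    (σ : Equiv.Perm P) (hσ : ∀ C ∈ 𝓑, σ • C ∈ 𝓑) :
    #{x | σ x = x} = #{C ∈ 𝓑 | σ • C = C} := by
  have hlk := (hD.lam_lt_k hsym).le
  -- double count the pairs `(x, C)` with `x ∈ C ∩ σ • C`
  have hblocks : ∑ C ∈ 𝓑, #(C ∩ σ • C) = ∑ C ∈ 𝓑, if σ • C = C then k else lam :=
    sum_congr rfl fun C hC => by
      split_ifs with h
      · rw [h, inter_self, hD.blocks_card C hC]
      · exact hD.card_inter_eq hsym hC (hσ C hC) (Ne.symm h)
  have hpoints : ∑ C ∈ 𝓑, #(C ∩ σ • C) = ∑ x, if σ x = x then k else lam := by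
    have hinter : ∀ C : Finset P, C ∩ σ • C = ({x | x ∈ C ∧ σ⁻¹ • x ∈ C} : Finset P) :=
      fun C => by ext x; simp only [mem_inter, mem_filter, mem_univ, true_and, inv_smul_mem_iff]
    simp_rw [hinter, card_filter]
    rw [sum_comm]
    simp_rw [← card_filter, hD.card_filter_mem_mem hsym, eq_inv_smul_iff, Equiv.Perm.smul_def]
  have := hblocks.symm.trans hpoints
  rw [sum_ite_const_of_le _ _ hlk, sum_ite_const_of_le _ _ hlk, card_univ, hD.card_points,
    hsym] at this
  exact (Nat.eq_of_mul_eq_mul_right (Nat.sub_pos_of_lt (hD.lam_lt_k hsym))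
    (Nat.add_left_cancel this)).symm

theorem exists_mem_mem (hD : IsDesign 𝓑 v k lam) {x y : P} (hxy : x ≠ y) :
    ∃ C ∈ 𝓑, x ∈ C ∧ y ∈ C := by
  obtain ⟨C, hC⟩ := card_pos.mp (hD.pair_blocks x y hxy ▸ hD.lam_pos)
  exact ⟨C, (mem_filter.mp hC).1, (mem_filter.mp hC).2⟩

theorem exists_mem (hD : IsDesign 𝓑 v k lam) (x : P) : ∃ C ∈ 𝓑, x ∈ C := by
  obtain ⟨y, hyx⟩ := Fintype.exists_ne_of_one_lt_card
    (by have := hD.k_lt_v; have := hD.two_lt_k; rw [hD.card_points]; omega) x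
  obtain ⟨C, hC, hxC, -⟩ := hD.exists_mem_mem hyx.symm
  exact ⟨C, hC, hxC⟩

theorem exists_mem_notMem (hD : IsDesign 𝓑 v k lam) (hsym : #𝓑 = v) {x y : P} (hxy : x ≠ y) :
    ∃ C ∈ 𝓑, x ∈ C ∧ y ∉ C := by
  by_contra! hall
  have hsub : {C ∈ 𝓑 | x ∈ C} ⊆ {C ∈ 𝓑 | x ∈ C ∧ y ∈ C} := fun C hC => by
    rw [mem_filter] at hC ⊢
    exact ⟨hC.1, hC.2, hall C hC.1 hC.2⟩
  have := card_le_card hsub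
  rw [hD.card_filter_mem hsym, hD.pair_blocks x y hxy] at this
  exact absurd this (not_le.mpr (hD.lam_lt_k hsym))

theorem nonempty_of_mem (hD : IsDesign 𝓑 v k lam) {C : Finset P} (hC : C ∈ 𝓑) : C.Nonempty :=
  card_pos.mp (by rw [hD.blocks_card C hC]; have := hD.two_lt_k; omega)

end IsDesign

namespace Subgroup

variable {G : Type*} [Group G] {H K : Subgroup G}

theorem mul_mem_iff_of_relIndex_eq_two (h : H.relIndex K = 2) {a b : G} (ha : a ∈ K)
    (hb : b ∈ K) : a * b ∈ H ↔ (a ∈ H ↔ b ∈ H) := by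
  simpa only [mem_subgroupOf, coe_mul] using
    mul_mem_iff_of_index_two h (a := ⟨a, ha⟩) (b := ⟨b, hb⟩)

theorem le_normalizer_of_relIndex_eq_two (h : H.relIndex K = 2) (hHK : H ≤ K) :
    K ≤ normalizer (H : Set G) := by
  intro g hg
  rw [mem_normalizer_iff]
  intro x
  by_cases hx : x ∈ K
  · rw [mul_mem_iff_of_relIndex_eq_two h (mul_mem hg hx) (inv_mem hg),
      mul_mem_iff_of_relIndex_eq_two h hg hx, inv_mem_iff]
    tauto
  · have hconj : g * x * g⁻¹ ∉ K := fun hK =>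
      hx (by simpa [mul_assoc] using mul_mem (mul_mem (inv_mem hg) hK) hg)
    exact iff_of_false (fun hH => hx (hHK hH)) (fun hH => hconj (hHK hH))

theorem relIndex_eq_two_of_card_eq (hHK : H ≤ K) (hH : Nat.card H ≠ 0)
    (hcard : Nat.card K = 2 * Nat.card H) : H.relIndex K = 2 := by
  have := (H.subgroupOf K).card_mul_index
  rw [Nat.card_congr (subgroupOfEquivOfLe hHK).toEquiv, hcard, mul_comm 2] at this
  exact Nat.eq_of_mul_eq_mul_left (Nat.pos_of_ne_zero hH) this

end Subgroup

namespace MulAction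

variable {G X : Type*} [Group G] [MulAction G X] {H K : Subgroup G}

theorem smul_mem_fixedPoints_of_mem_normalizer {g : G} (hg : g ∈ Subgroup.normalizer (H : Set G))
    {x : X} (hx : x ∈ fixedPoints H X) : g • x ∈ fixedPoints H X := fun h => by
  rw [Subgroup.smul_def, ← inv_smul_eq_iff, smul_smul, smul_smul]
  exact hx ⟨_, (Subgroup.mem_normalizer_iff''.mp hg h).mp h.2⟩

theorem smul_fixedPoints_of_mem_normalizer {g : G} (hg : g ∈ Subgroup.normalizer (H : Set G)) :
    g • fixedPoints H X = fixedPoints H X :=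
  (Set.smul_set_subset_iff.mpr fun _ hx => smul_mem_fixedPoints_of_mem_normalizer hg hx).antisymm
    fun x hx => ⟨g⁻¹ • x, smul_mem_fixedPoints_of_mem_normalizer (inv_mem hg) hx, smul_inv_smul g x⟩

theorem mem_iff_mem_of_mem_orbit [DecidableEq X] {z : X} (hz : z ∈ fixedPoints H X)
    {C D : Finset X} (hD : D ∈ orbit H C) : z ∈ D ↔ z ∈ C := by
  obtain ⟨h, rfl⟩ := hD
  rw [← Finset.inv_smul_mem_iff, hz h⁻¹]

theorem exists_fixedPoints_eq_fixedBy_of_isCyclic [IsCyclic H] :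
    ∃ g ∈ H, fixedPoints H X = fixedBy X g := by
  obtain ⟨g, hg⟩ := IsCyclic.exists_generator (α := H)
  refine ⟨g, g.2, Set.ext fun x => ⟨fun hx => hx g, fun hx h => ?_⟩⟩
  obtain ⟨m, rfl⟩ := Subgroup.mem_zpowers_iff.mp (hg h)
  exact mem_fixedBy_zpow hx m

theorem ncard_fixedPoints_eq_card_subtype :
    (fixedPoints H X).ncard = Nat.card {x : X // ∀ g ∈ H, g • x = x} := by
  rw [← Nat.card_coe_set_eq]
  exact Nat.card_congr (Equiv.subtypeEquivRight fun x => by simp [mem_fixedPoints])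

theorem notMem_fixedPoints_of_relIndex_eq_two (h : H.relIndex K = 2) {x : X}
    (hx : 2 < (orbit K x).ncard) : x ∉ fixedPoints H X := fun hfix => by
  have hle : H.subgroupOf K ≤ stabilizer K x := fun g hg => hfix ⟨g, hg⟩
  have := Nat.le_of_dvd two_pos ((show (H.subgroupOf K).index = 2 from h) ▸
    Subgroup.index_dvd_of_le hle)
  rw [index_stabilizer] at this
  omega

theorem exists_le_stabilizer_of_relIndex_eq_two [Finite X] (h : H.relIndex K = 2)
    (hHK : H ≤ K) (hodd : Odd (fixedPoints H X).ncard) :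
    ∃ x ∈ fixedPoints H X, K ≤ stabilizer G x := by
  classical
  -- some `t ∈ K \ H` acts on the odd set of `H`-fixed points as an involution, so it fixes one
  obtain ⟨t, htK, htH⟩ : ∃ t ∈ K, t ∉ H := Set.not_subset.mp fun hKH =>
    absurd (Subgroup.relIndex_eq_one.mpr hKH) (by rw [h]; decide)
  have hnorm := Subgroup.le_normalizer_of_relIndex_eq_two h hHK
  let σ : Equiv.Perm (fixedPoints H X) := (toPerm t).subtypePerm fun x =>
    ⟨fun hx => by simpa using smul_mem_fixedPoints_of_mem_normalizer (hnorm (inv_mem htK)) hx,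
      smul_mem_fixedPoints_of_mem_normalizer (hnorm htK)⟩
  have hσ : σ ^ 2 ^ 1 = 1 := by
    have htt : t * t ∈ H := (Subgroup.mul_mem_iff_of_relIndex_eq_two h htK htK).mpr Iff.rfl
    ext ⟨x, hx⟩
    simp only [pow_one, sq, Equiv.Perm.mul_apply, σ, Equiv.Perm.subtypePerm_apply, toPerm_apply,
      Equiv.Perm.one_apply, smul_smul]
    exact hx ⟨t * t, htt⟩
  have : Fact (Nat.Prime 2) := ⟨Nat.prime_two⟩
  have : Fintype (fixedPoints H X) := Fintype.ofFinite _
  obtain ⟨⟨x, hxH⟩, hσx⟩ := Equiv.Perm.exists_fixed_point_of_prime (p := 2) (by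
    rw [← Nat.card_eq_fintype_card, Nat.card_coe_set_eq, Nat.two_dvd_ne_zero]
    exact Nat.odd_iff.mp hodd) hσ
  have htx : t • x = x := congrArg Subtype.val hσx
  refine ⟨x, hxH, fun g hg => ?_⟩
  by_cases hgH : g ∈ H
  · exact hxH ⟨g, hgH⟩
  · have hm : t⁻¹ * g ∈ H := (Subgroup.mul_mem_iff_of_relIndex_eq_two h (inv_mem htK) hg).mpr
      (iff_of_false (by rwa [inv_mem_iff]) hgH)
    rw [mem_stabilizer_iff, ← mul_inv_cancel_left t g, mul_smul, show (t⁻¹ * g) • x = x from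
      hxH ⟨_, hm⟩, htx]

end MulAction

section FlagTransitive

variable {α : Type*} [DecidableEq α] {𝓑 : Finset (Finset α)} {G : Subgroup (Equiv.Perm α)}

theorem IsFlagTransitive.exists_smul_eq (hflag : IsFlagTransitive G 𝓑) {C C' : Finset α}
    (hC : C ∈ 𝓑) (hC' : C' ∈ 𝓑) {x x' : α} (hx : x ∈ C) (hx' : x' ∈ C') :
    ∃ g : G, g • x = x' ∧ g • C = C' :=
  let ⟨g, hg, hgx, hgC⟩ := hflag C hC C' hC' x hx x' hx'
  ⟨⟨g, hg⟩, hgx, hgC⟩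

theorem IsFlagTransitive.orbit_stabilizer_block (hflag : IsFlagTransitive G 𝓑) {C : Finset α}
    (hC : C ∈ 𝓑) {x : α} (hx : x ∈ C) : orbit (stabilizer G C) x = C := by
  ext y
  constructor
  · rintro ⟨g, rfl⟩
    have : (g : G) • x ∈ (g : G) • C := smul_mem_smul_finset hx
    rwa [g.2] at this
  · intro hy
    obtain ⟨g, hgx, hgC⟩ := hflag.exists_smul_eq hC hC hx hy
    exact ⟨⟨g, hgC⟩, hgx⟩

theorem IsFlagTransitive.exists_mem_stabilizer_smul_eq (hflag : IsFlagTransitive G 𝓑)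
    {C C' : Finset α} (hC : C ∈ 𝓑) (hC' : C' ∈ 𝓑) {x : α} (hx : x ∈ C) (hx' : x ∈ C') :
    ∃ g ∈ stabilizer G x, g • C = C' :=
  (hflag.exists_smul_eq hC hC' hx hx').imp fun _ => id

theorem IsFlagTransitive.mem_orbit_or_mem_orbit {N : Subgroup G} (hflag : IsFlagTransitive G 𝓑)
    {x : α} (hN : N.relIndex (stabilizer G x) = 2)
    {C C' D : Finset α} (hC : C ∈ 𝓑) (hC' : C' ∈ 𝓑) (hD : D ∈ 𝓑) (hxC : x ∈ C) (hxC' : x ∈ C')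
    (hxD : x ∈ D) (hC'C : C' ∉ orbit N C) : D ∈ orbit N C ∨ D ∈ orbit N C' := by
  obtain ⟨g, hg, hgD⟩ := hflag.exists_mem_stabilizer_smul_eq hC hD hxC hxD
  obtain ⟨w, hw, hwC'⟩ := hflag.exists_mem_stabilizer_smul_eq hC hC' hxC hxC'
  by_cases hgN : g ∈ N
  · exact Or.inl ⟨⟨g, hgN⟩, hgD⟩
  have hwN : w ∉ N := fun hwN => hC'C ⟨⟨w, hwN⟩, hwC'⟩
  have hgw : g * w⁻¹ ∈ N := (Subgroup.mul_mem_iff_of_relIndex_eq_two hN hg (inv_mem hw)).mpr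
    (iff_of_false hgN (by rwa [inv_mem_iff]))
  refine Or.inr ⟨⟨g * w⁻¹, hgw⟩, ?_⟩
  change (g * w⁻¹) • C' = D
  rw [← hwC', smul_smul, inv_mul_cancel_right, hgD]

end FlagTransitive

section FlagTransitiveDesign

variable {𝓑 : Finset (Finset P)} {v k lam : ℕ} {G : Subgroup (Equiv.Perm P)}

theorem IsFlagTransitive.index_stabilizer_point (hD : IsDesign 𝓑 v k lam)
    (hflag : IsFlagTransitive G 𝓑) (x : P) : (stabilizer G x).index = v := by
  have horbit : orbit G x = Set.univ := Set.eq_univ_of_forall fun y => by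
    obtain ⟨Cx, hCx, hx⟩ := hD.exists_mem x
    obtain ⟨Cy, hCy, hy⟩ := hD.exists_mem y
    obtain ⟨g, hgx, -⟩ := hflag.exists_smul_eq hCx hCy hx hy
    exact ⟨g, hgx⟩
  rw [index_stabilizer, horbit, Set.ncard_univ, Nat.card_eq_fintype_card, hD.card_points]

theorem IsFlagTransitive.index_stabilizer_block (hD : IsDesign 𝓑 v k lam) (hAut : IsAutGroup G 𝓑)
    (hflag : IsFlagTransitive G 𝓑) {C : Finset P} (hC : C ∈ 𝓑) :
    (stabilizer G C).index = #𝓑 := by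
  have horbit : orbit G C = 𝓑 := by
    ext C'
    refine ⟨?_, fun hC' => ?_⟩
    · rintro ⟨g, rfl⟩
      exact hAut g g.2 C hC
    · obtain ⟨x, hx⟩ := hD.nonempty_of_mem hC
      obtain ⟨y, hy⟩ := hD.nonempty_of_mem hC'
      obtain ⟨g, -, hgC⟩ := hflag.exists_smul_eq hC hC' hx hy
      exact ⟨g, hgC⟩
  rw [index_stabilizer, horbit, Set.ncard_coe_finset]

theorem IsFlagTransitive.card_stabilizer_point_eq (hD : IsDesign 𝓑 v k lam) (hsym : #𝓑 = v)
    (hAut : IsAutGroup G 𝓑) (hflag : IsFlagTransitive G 𝓑) (x : P) {C : Finset P} (hC : C ∈ 𝓑) :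
    Nat.card (stabilizer G x) = Nat.card (stabilizer G C) := by
  have hxG := (stabilizer G x).card_mul_index
  have hCG := (stabilizer G C).card_mul_index
  rw [hflag.index_stabilizer_point hD] at hxG
  rw [hflag.index_stabilizer_block hD hAut hC, hsym, ← hxG] at hCG
  exact (Nat.eq_of_mul_eq_mul_right (by have := hD.k_lt_v; omega) hCG).symm

end FlagTransitiveDesign

section FixedPoints

variable {𝓑 : Finset (Finset P)} {v k lam : ℕ} {G : Subgroup (Equiv.Perm P)} {N : Subgroup G}

theorem IsFlagTransitive.mem_orbit_of_mem_of_mem (hD : IsDesign 𝓑 v k lam) (hsym : #𝓑 = v)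
    (hflag : IsFlagTransitive G 𝓑) {x y : P} (hN : N.relIndex (stabilizer G x) = 2)
    (hy : y ∈ fixedPoints N P) (hxy : x ≠ y) {C C' : Finset P} (hC : C ∈ 𝓑) (hC' : C' ∈ 𝓑)
    (hxC : x ∈ C) (hyC : y ∈ C) (hxC' : x ∈ C') (hyC' : y ∈ C') : C' ∈ orbit N C := by
  by_contra hC'C
  obtain ⟨D, hDmem, hxD, hyD⟩ := hD.exists_mem_notMem hsym hxy
  rcases hflag.mem_orbit_or_mem_orbit hN hC hC' hDmem hxC hxC' hxD hC'C with h | h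
  · exact hyD ((mem_iff_mem_of_mem_orbit hy h).mpr hyC)
  · exact hyD ((mem_iff_mem_of_mem_orbit hy h).mpr hyC')

theorem IsFlagTransitive.exists_block_fixedPoints_split (hD : IsDesign 𝓑 v k lam)
    (hsym : #𝓑 = v) (hflag : IsFlagTransitive G 𝓑) {x y : P}
    (hN : N.relIndex (stabilizer G x) = 2) (hx : x ∈ fixedPoints N P) (hy : y ∈ fixedPoints N P)
    (hxy : x ≠ y) {C : Finset P} (hC : C ∈ 𝓑) (hxC : x ∈ C) (hyC : y ∈ C) :
    ∃ D ∈ 𝓑, fixedPoints N P ∩ C ∪ fixedPoints N P ∩ D = fixedPoints N P ∧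
      fixedPoints N P ∩ C ∩ (fixedPoints N P ∩ D) = {x} ∧
      (fixedPoints N P ∩ C).ncard = (fixedPoints N P ∩ D).ncard := by
  obtain ⟨D, hDmem, hxD, hyD⟩ := hD.exists_mem_notMem hsym hxy
  have hDC : D ∉ orbit N C := fun h => hyD ((mem_iff_mem_of_mem_orbit hy h).mpr hyC)
  refine ⟨D, hDmem, ?_, ?_, ?_⟩
  · refine (Set.union_subset Set.inter_subset_left Set.inter_subset_left).antisymm fun z hz => ?_
    obtain rfl | hzx := eq_or_ne z x
    · exact Or.inl ⟨hz, hxC⟩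
    obtain ⟨E, hE, hxE, hzE⟩ := hD.exists_mem_mem hzx.symm
    rcases hflag.mem_orbit_or_mem_orbit hN hC hDmem hE hxC hxD hxE hDC with h | h
    · exact Or.inl ⟨hz, (mem_iff_mem_of_mem_orbit hz h).mp hzE⟩
    · exact Or.inr ⟨hz, (mem_iff_mem_of_mem_orbit hz h).mp hzE⟩
  · refine Set.eq_singleton_iff_unique_mem.mpr ⟨⟨⟨hx, hxC⟩, hx, hxD⟩, ?_⟩
    rintro z ⟨⟨hz, hzC⟩, -, hzD⟩
    by_contra hzx
    exact hDC (hflag.mem_orbit_of_mem_of_mem hD hsym hN hz (Ne.symm hzx) hC hDmem hxC hzC hxD hzD)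
  · obtain ⟨w, hw, hwD⟩ := hflag.exists_mem_stabilizer_smul_eq hC hDmem hxC hxD
    have hwN := Subgroup.le_normalizer_of_relIndex_eq_two hN (fun g hg => hx ⟨g, hg⟩) hw
    rw [← hwD, Finset.coe_smul_finset, ← Set.ncard_smul_set w, Set.smul_set_inter,
      smul_fixedPoints_of_mem_normalizer hwN]

theorem IsFlagTransitive.ncard_fixedPoints_add_one (hD : IsDesign 𝓑 v k lam)
    (hsym : #𝓑 = v) (hflag : IsFlagTransitive G 𝓑) {x y : P}
    (hN : N.relIndex (stabilizer G x) = 2) (hx : x ∈ fixedPoints N P) (hy : y ∈ fixedPoints N P)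
    (hxy : x ≠ y) {C : Finset P} (hC : C ∈ 𝓑) (hxC : x ∈ C) (hyC : y ∈ C) :
    (fixedPoints N P).ncard + 1 = 2 * (fixedPoints N P ∩ C).ncard := by
  obtain ⟨D, -, hunion, hinter, hcard⟩ :=
    hflag.exists_block_fixedPoints_split hD hsym hN hx hy hxy hC hxC hyC
  have := Set.ncard_union_add_ncard_inter (fixedPoints N P ∩ C) (fixedPoints N P ∩ D)
  rw [hunion, hinter, Set.ncard_singleton, ← hcard] at this
  omega

theorem IsFlagTransitive.ncard_fixedPoints_eq_one_or_three (hD : IsDesign 𝓑 v k lam)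
    (hsym : #𝓑 = v) (hflag : IsFlagTransitive G 𝓑)
    (hN : ∀ x ∈ fixedPoints N P, N.relIndex (stabilizer G x) = 2)
    (hne : (fixedPoints N P).Nonempty) :
    (fixedPoints N P).ncard = 1 ∨ (fixedPoints N P).ncard = 3 := by
  obtain hle | hlt := le_or_gt (fixedPoints N P).ncard 1
  · exact Or.inl (hle.antisymm ((Set.ncard_pos).mpr hne))
  right
  obtain ⟨x, hx, y, hy, hxy⟩ := (Set.one_lt_ncard).mp hlt
  obtain ⟨C, hC, hxC, hyC⟩ := hD.exists_mem_mem hxy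
  obtain ⟨D, hDmem, hunion, hinter, hcard⟩ :=
    hflag.exists_block_fixedPoints_split hD hsym (hN x hx) hx hy hxy hC hxC hyC
  have hCx : 1 < (fixedPoints N P ∩ C).ncard :=
    (Set.one_lt_ncard).mpr ⟨x, ⟨hx, hxC⟩, y, ⟨hy, hyC⟩, hxy⟩
  obtain ⟨z, ⟨hz, hzD⟩, hzx⟩ := Set.exists_ne_of_one_lt_ncard (hcard ▸ hCx) x
  have hyz : y ≠ z := fun h => hzx (hinter.subset ⟨⟨hz, h ▸ hyC⟩, hz, hzD⟩)
  obtain ⟨E, hE, hyE, hzE⟩ := hD.exists_mem_mem hyz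
  -- two fixed points on both `E` and `C` (resp. `D`) would put `z` on `C` (resp. `y` on `D`)
  have htrace : fixedPoints N P ∩ E ⊆ {y, z} := by
    rintro u ⟨hu, huE⟩
    by_contra hyzu
    obtain ⟨huy, huz⟩ : u ≠ y ∧ u ≠ z := by simpa [not_or] using hyzu
    rcases hunion.symm.subset hu with ⟨-, huC⟩ | ⟨-, huD⟩
    · have hEC := hflag.mem_orbit_of_mem_of_mem hD hsym (hN y hy) hu huy.symm hC hE hyC huC hyE huE
      exact hzx (hinter.subset ⟨⟨hz, (mem_iff_mem_of_mem_orbit hz hEC).mp hzE⟩, hz, hzD⟩)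
    · have hED :=
        hflag.mem_orbit_of_mem_of_mem hD hsym (hN z hz) hu huz.symm hDmem hE hzD huD hzE huE
      exact hxy (hinter.subset ⟨⟨hy, hyC⟩, hy, (mem_iff_mem_of_mem_orbit hy hED).mp hyE⟩).symm
  have hEy := hflag.ncard_fixedPoints_add_one hD hsym (hN y hy) hy hz hyz hE hyE hzE
  have := Set.ncard_le_ncard htrace
  rw [Set.ncard_pair hyz] at this
  omega

theorem IsDesign.fixedPoints_nonempty_of_isCyclic (hD : IsDesign 𝓑 v k lam) (hsym : #𝓑 = v)
    (hAut : IsAutGroup G 𝓑) [IsCyclic N] {B : Finset P} (hB : B ∈ 𝓑)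
    (hNB : N ≤ stabilizer G B) : (fixedPoints N P).Nonempty := by
  obtain ⟨g, hgN, hfix⟩ := exists_fixedPoints_eq_fixedBy_of_isCyclic (H := N) (X := P)
  have hcount := hD.card_fixedPoints_eq_card_fixedBlocks hsym g fun C hC => hAut g g.2 C hC
  have hfixB : B ∈ {C ∈ 𝓑 | (g : Equiv.Perm P) • C = C} := mem_filter.mpr ⟨hB, hNB hgN⟩
  have : 0 < #{x | (g : Equiv.Perm P) x = x} := hcount ▸ card_pos.mpr ⟨B, hfixB⟩
  obtain ⟨x, hx⟩ := card_pos.mp this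
  rw [hfix]
  exact ⟨x, (mem_filter.mp hx).2⟩

end FixedPoints

theorem Subgroup.exists_isCyclic_card_eq_of_mulEquiv_dihedralGroup {G : Type*} [Group G]
    {K : Subgroup G} {n : ℕ} (e : K ≃* DihedralGroup n) :
    ∃ N ≤ K, IsCyclic N ∧ Nat.card N = n :=
  ⟨zpowers (e.symm (DihedralGroup.r 1) : G), zpowers_le.mpr (e.symm (DihedralGroup.r 1)).2,
    inferInstance, by
      rw [Nat.card_zpowers, Subgroup.orderOf_coe, MulEquiv.orderOf_eq, DihedralGroup.orderOf_r_one]⟩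

theorem stmt_17_general (𝓑 : Finset (Finset P)) (v k lam n : ℕ)
    (hD : IsDesign 𝓑 v k lam) (hsym : 𝓑.card = v)
    (G : Subgroup (Equiv.Perm P)) (hAut : IsAutGroup G 𝓑)
    (hflag : IsFlagTransitive G 𝓑) (hn : 3 ≤ n)
    (B : Finset P) (hB : B ∈ 𝓑)
    (hdih : Nonempty (MulAction.stabilizer G B ≃* DihedralGroup n)) :
    (∃ x : P, x ∉ B ∧ MulAction.stabilizer G B = MulAction.stabilizer G x) ∧
    (∀ N : Subgroup G, N ≤ MulAction.stabilizer G B → IsCyclic N → Nat.card N = n →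
      Nat.card {x : P // ∀ g ∈ N, g • x = x} = 1 ∨
        Nat.card {x : P // ∀ g ∈ N, g • x = x} = 3) := by
  have : NeZero n := ⟨by omega⟩
  have hcardB : Nat.card (stabilizer G B) = 2 * n := by
    rw [Nat.card_congr hdih.some.toEquiv, Nat.card_eq_fintype_card, DihedralGroup.card]
  have hcardx (x : P) : Nat.card (stabilizer G x) = 2 * n :=
    (hflag.card_stabilizer_point_eq hD hsym hAut x hB).trans hcardB
  have hfixed (N : Subgroup G) (hNB : N ≤ stabilizer G B) (hcyc : IsCyclic N)
      (hN : Nat.card N = n) : (fixedPoints N P).ncard = 1 ∨ (fixedPoints N P).ncard = 3 :=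
    hflag.ncard_fixedPoints_eq_one_or_three hD hsym
      (fun x hx => Subgroup.relIndex_eq_two_of_card_eq (fun g hg => hx ⟨g, hg⟩) (by omega)
        (by rw [hcardx, hN]))
      (hD.fixedPoints_nonempty_of_isCyclic hsym hAut hB hNB)
  refine ⟨?_, fun N hNB hcyc hN => ?_⟩
  · obtain ⟨N, hNB, hcyc, hN⟩ :=
      Subgroup.exists_isCyclic_card_eq_of_mulEquiv_dihedralGroup hdih.some
    have hrel : N.relIndex (stabilizer G B) = 2 :=
      Subgroup.relIndex_eq_two_of_card_eq hNB (by omega) (by rw [hcardB, hN])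
    obtain ⟨x, hxN, hBx⟩ := exists_le_stabilizer_of_relIndex_eq_two hrel hNB
      (by rcases hfixed N hNB hcyc hN with h | h <;> rw [h] <;> decide)
    refine ⟨x, fun hxB => notMem_fixedPoints_of_relIndex_eq_two hrel ?_ hxN,
      Subgroup.eq_of_le_of_card_ge hBx (by rw [hcardx, hcardB])⟩
    rw [hflag.orbit_stabilizer_block hB hxB, Set.ncard_coe_finset, hD.blocks_card B hB]
    exact hD.two_lt_k
  · simpa only [ncard_fixedPoints_eq_card_subtype] using hfixed N hNB hcyc hN

/-- **Lemma 6.5.** Let `G` be a flag-transitive automorphism group of a symmetric design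
with `λ > 1` and suppose `G_B ≅ D_{2n}` with `n ≥ 3`. Then `G_B = G_x` for some point
`x ∉ B`, and the number of common fixed points of a cyclic subgroup of order `n` of
`G_B` is `1` or `3`. -/
theorem stmt_17 (𝓑 : Finset (Finset P)) (v k lam n : ℕ)
    (hD : IsDesign 𝓑 v k lam) (hsym : 𝓑.card = v) (hlam : 1 < lam)
    (G : Subgroup (Equiv.Perm P)) (hAut : IsAutGroup G 𝓑)
    (hflag : IsFlagTransitive G 𝓑) (hn : 3 ≤ n)
    (B : Finset P) (hB : B ∈ 𝓑)
    (hdih : Nonempty (MulAction.stabilizer G B ≃* DihedralGroup n)) :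
    (∃ x : P, x ∉ B ∧ MulAction.stabilizer G B = MulAction.stabilizer G x) ∧
    (∀ N : Subgroup G, N ≤ MulAction.stabilizer G B → IsCyclic N → Nat.card N = n →
      Nat.card {x : P // ∀ g ∈ N, g • x = x} = 1 ∨
        Nat.card {x : P // ∀ g ∈ N, g • x = x} = 3) :=
  stmt_17_general 𝓑 v k lam n hD hsym G hAut hflag hn B hB hdih
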